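/- Let p ≥ 5 be an integer. In the white metallic tree, for every k ∈ ℕ the node m (k+1) is the preferred son of the node m k: shift(m k) = m (k+1), and m (k+1) is the penultimate son of the node numbered m k. -/

import Mathlib

/-- The white metallic sequence: `m 0 = 1`, `m 1 = p - 2`,
`m (n+2) = (p-2) * m (n+1) - m n`. -/
def mseq (p : ℕ) : ℕ → ℤ
  | 0 => 1
  | 1 => (p : ℤ) - 2
  | n + 2 => ((p : ℤ) - 2) * mseq p (n + 1) - mseq p n

/-- The black metallic sequence: `b 0 = 1`, `b 1 = p - 3`,
`b (n+2) = (p-2) * b (n+1) - b n`. -/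
def bseq (p : ℕ) : ℕ → ℤ
  | 0 => 1
  | 1 => (p : ℤ) - 3
  | n + 2 => ((p : ℤ) - 2) * bseq p (n + 1) - bseq p n

/-- The two kinds of nodes of a metallic tree. -/
inductive Letter
  | B : Letter
  | W : Letter
deriving DecidableEq

/-- The generating rules: `B → B W^(p-4)` and `W → B W^(p-3)`. -/
def subst (p : ℕ) : Letter → List Letter
  | Letter.B => Letter.B :: List.replicate (p - 4) Letter.W
  | Letter.W => Letter.B :: List.replicate (p - 3) Letter.W

/-- Level words of the white metallic tree (rooted at a white node). -/
def whiteLevel (p : ℕ) : ℕ → List Letter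
  | 0 => [Letter.W]
  | n + 1 => (whiteLevel p n).flatMap (subst p)

/-- Level words of the black metallic tree (rooted at a black node). -/
def blackLevel (p : ℕ) : ℕ → List Letter
  | 0 => [Letter.B]
  | n + 1 => (blackLevel p n).flatMap (subst p)

/-- Node `ν` of the white metallic tree sits in position `j` (counted from 1)
of the level word `L n`: nodes are numbered level by level, left to right,
starting from 1, so `ν = M (n-1) + j` where `M (n-1) = ∑_{i=0}^{n-1} m i`. -/
def NodePos (p : ℕ) (ν : ℕ) (n j : ℕ) : Prop :=
  (ν : ℤ) = (∑ i ∈ Finset.range n, mseq p i) + (j : ℤ) ∧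
    1 ≤ j ∧ j ≤ (whiteLevel p n).length

/-- The arity (number of sons) of a letter: a white node has `p - 2` sons,
a black one `p - 3` sons. -/
def arity (p : ℕ) : Letter → ℕ
  | Letter.B => p - 3
  | Letter.W => p - 2

/-- `csum p n j` is the sum of the arities of the first `j` letters of the
level word `L n` of the white metallic tree. -/
def csum (p : ℕ) (n j : ℕ) : ℕ :=
  (((whiteLevel p n).take j).map (arity p)).sum

/-- `σ` is a son of `ν` in the white metallic tree: if `ν` is in position `j`
of level `n`, its sons are the nodes of level `n+1` in positions
`csum p n (j-1) + 1` through `csum p n j`. -/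
def IsSon (p : ℕ) (ν σ : ℕ) : Prop :=
  ∃ n j j', NodePos p ν n j ∧ NodePos p σ (n + 1) j' ∧
    csum p n (j - 1) < j' ∧ j' ≤ csum p n j

/-- `σ` is the last son of `ν` in the white metallic tree. -/
def IsLastSon (p : ℕ) (ν σ : ℕ) : Prop :=
  ∃ n j j', NodePos p ν n j ∧ NodePos p σ (n + 1) j' ∧
    csum p n (j - 1) < j' ∧ j' = csum p n j

/-- `σ` is the penultimate son of `ν` in the white metallic tree. -/
def IsPenultimateSon (p : ℕ) (ν σ : ℕ) : Prop :=
  ∃ n j j', NodePos p ν n j ∧ NodePos p σ (n + 1) j' ∧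
    csum p n (j - 1) < j' ∧ j' = csum p n j - 1

/-- The node `ν` is a black node of the white metallic tree. -/
def IsBlackNode (p : ℕ) (ν : ℕ) : Prop :=
  ∃ n j, NodePos p ν n j ∧ (whiteLevel p n).getD (j - 1) Letter.W = Letter.B

/-- The node `ν` is a white node of the white metallic tree. -/
def IsWhiteNode (p : ℕ) (ν : ℕ) : Prop :=
  ∃ n j, NodePos p ν n j ∧ (whiteLevel p n).getD (j - 1) Letter.B = Letter.W

/-- The forbidden pattern `d c^* d` (with `d = p - 3`, `c = p - 4`) does not
occur among the digits `a`. -/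
def NoForbiddenPattern (p : ℕ) (a : ℕ →₀ ℕ) : Prop :=
  ¬ ∃ i j : ℕ, i < j ∧ a i = p - 3 ∧ a j = p - 3 ∧
      ∀ k, i < k → k < j → a k = p - 4

/-- `a` is the metallic code of `ν`: a metallic representation
`ν = ∑ i, a i * m i` with digits `a i ≤ p - 3` and no forbidden pattern. -/
def IsCode (p : ℕ) (ν : ℕ) (a : ℕ →₀ ℕ) : Prop :=
  (∀ i, a i ≤ p - 3) ∧ (ν : ℤ) = a.sum (fun i c => (c : ℤ) * mseq p i) ∧
    NoForbiddenPattern p a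

/-- `shiftCode p a = ∑ i, a i * m (i+1)`: the number whose metallic code is the
word of digits `a` followed by a `0`. -/
def shiftCode (p : ℕ) (a : ℕ →₀ ℕ) : ℤ :=
  a.sum fun i c => (c : ℤ) * mseq p (i + 1)


section AuxMetallic

lemma mseq_two' (p n : ℕ) : mseq p (n+2) = ((p : ℤ) - 2) * mseq p (n + 1) - mseq p n := rfl

lemma mseq_pos_lt' (p : ℕ) (hp : 5 ≤ p) : ∀ n, 1 ≤ mseq p n ∧ mseq p n < mseq p (n+1) := by
  have hp' : (5:ℤ) ≤ (p:ℤ) := by exact_mod_cast hp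
  intro n
  induction n with
  | zero => constructor
            · simp [mseq]
            · show (1:ℤ) < (p:ℤ) - 2; linarith
  | succ n ih =>
    obtain ⟨h1, h2⟩ := ih
    have e : mseq p (n+2) = ((p : ℤ) - 2) * mseq p (n + 1) - mseq p n := rfl
    constructor
    · linarith
    · rw [e]; nlinarith [mul_nonneg (by linarith : (0:ℤ) ≤ (p:ℤ)-5) (by linarith : (0:ℤ) ≤ mseq p (n+1))]

lemma mseq_pos' (p : ℕ) (hp : 5 ≤ p) (n : ℕ) : 1 ≤ mseq p n := (mseq_pos_lt' p hp n).1

lemma mseq_mono' (p : ℕ) (hp : 5 ≤ p) : StrictMono (mseq p) :=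
  strictMono_nat_of_lt_succ fun n => (mseq_pos_lt' p hp n).2

lemma mseq_identity' (p : ℕ) (hp : 5 ≤ p) :
    ∀ n, mseq p (n+1) = ((p:ℤ)-3) * mseq p n + ((p:ℤ)-4) * (∑ i ∈ Finset.range n, mseq p i) + 1 := by
  intro n
  induction n with
  | zero => show (p:ℤ) - 2 = _ ; simp [mseq]; ring
  | succ n ih =>
    rw [Finset.sum_range_succ, mseq_two']
    linear_combination ih

lemma msum_nonneg' (p : ℕ) (hp : 5 ≤ p) (n : ℕ) : 0 ≤ ∑ i ∈ Finset.range n, mseq p i :=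
  Finset.sum_nonneg fun i _ => by linarith [mseq_pos' p hp i]

lemma msum_lt_mseq' (p : ℕ) (hp : 5 ≤ p) (n : ℕ) :
    (∑ i ∈ Finset.range n, mseq p i) + 1 ≤ mseq p n := by
  have hp' : (5:ℤ) ≤ (p:ℤ) := by exact_mod_cast hp
  cases n with
  | zero => simp [mseq]
  | succ n =>
    have hI := mseq_identity' p hp n
    have h1 := mseq_pos' p hp n
    have h2 := msum_nonneg' p hp n
    rw [Finset.sum_range_succ]
    nlinarith

lemma code_bound' (p : ℕ) (hp : 5 ≤ p) (a : ℕ →₀ ℕ) (h1 : ∀ i, a i ≤ p - 3)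
    (h2 : NoForbiddenPattern p a) :
    ∀ n, ∑ i ∈ Finset.range n, (a i : ℤ) * mseq p i ≤ mseq p n - 1 := by
  have hp' : (5:ℤ) ≤ (p:ℤ) := by exact_mod_cast hp
  intro n
  induction n using Nat.strong_induction_on with
  | _ n ih =>
  match n with
  | 0 => simp [mseq]
  | n+1 =>
    rw [Finset.sum_range_succ]
    have hI := mseq_identity' p hp n
    have hpos := mseq_pos' p hp n
    have hsn := msum_nonneg' p hp n
    by_cases hc : a n = p - 3
    · have hcz : ((a n : ℤ)) = (p:ℤ) - 3 := by omega
      by_cases hall : ∀ i < n, a i = p - 4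
      · have : ∑ i ∈ Finset.range n, (a i : ℤ) * mseq p i
            = ((p:ℤ)-4) * ∑ i ∈ Finset.range n, mseq p i := by
          rw [Finset.mul_sum]
          refine Finset.sum_congr rfl fun i hi => ?_
          have := hall i (Finset.mem_range.mp hi)
          have : ((a i : ℤ)) = (p:ℤ) - 4 := by omega
          rw [this]
        rw [this, hcz]; linarith
      · push_neg at hall
        obtain ⟨t0, ht0n, ht0⟩ := hall
        set s := (Finset.range n).filter (fun i => a i ≠ p - 4) with hs
        have hne : s.Nonempty := ⟨t0, by simp [hs, ht0n, ht0]⟩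
        set t := s.max' hne with ht
        have htmem := s.max'_mem hne
        have htn : t < n := Finset.mem_range.mp (Finset.mem_filter.mp htmem).1
        have hta : a t ≠ p - 4 := (Finset.mem_filter.mp htmem).2
        have htmax : ∀ i, t < i → i < n → a i = p - 4 := by
          intro i hti hin
          by_contra hne'
          have : i ∈ s := Finset.mem_filter.mpr ⟨Finset.mem_range.mpr hin, hne'⟩
          have := s.le_max' i this
          omega
        have htne3 : a t ≠ p - 3 := by
          intro h3
          exact h2 ⟨t, n, htn, h3, hc, htmax⟩
        have hta5 : (a t : ℤ) ≤ (p:ℤ) - 5 := by have := h1 t; omega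
        have hsplit : ∑ i ∈ Finset.range n, (a i : ℤ) * mseq p i
            = (∑ i ∈ Finset.range t, (a i : ℤ) * mseq p i) + (a t : ℤ) * mseq p t
              + ∑ i ∈ Finset.Ico (t+1) n, (a i : ℤ) * mseq p i := by
          rw [Finset.range_eq_Ico, ← Finset.sum_Ico_consecutive _ (Nat.zero_le (t+1)) htn,
            ← Finset.range_eq_Ico, Finset.sum_range_succ]
        have hmid : ∑ i ∈ Finset.Ico (t+1) n, (a i : ℤ) * mseq p i
            = ((p:ℤ)-4) * ∑ i ∈ Finset.Ico (t+1) n, mseq p i := by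
          rw [Finset.mul_sum]
          refine Finset.sum_congr rfl fun i hi => ?_
          obtain ⟨h1', h2'⟩ := Finset.mem_Ico.mp hi
          have := htmax i h1' h2'
          have : ((a i : ℤ)) = (p:ℤ) - 4 := by omega
          rw [this]
        have hsum_split : (∑ i ∈ Finset.range n, mseq p i)
            = (∑ i ∈ Finset.range t, mseq p i) + mseq p t + ∑ i ∈ Finset.Ico (t+1) n, mseq p i := by
          rw [Finset.range_eq_Ico, ← Finset.sum_Ico_consecutive _ (Nat.zero_le (t+1)) htn,
            ← Finset.range_eq_Ico, Finset.sum_range_succ]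
        have iht := ih t (by omega)
        have htpos := mseq_pos' p hp t
        have hst := msum_nonneg' p hp t
        rw [hsplit, hmid, hcz]
        have h5 : (a t : ℤ) * mseq p t ≤ ((p:ℤ)-5) * mseq p t :=
          mul_le_mul_of_nonneg_right hta5 (by linarith)
        nlinarith
    · have hle : (a n : ℤ) ≤ (p:ℤ) - 4 := by have := h1 n; omega
      have ihn := ih n (by omega)
      have h5 : (a n : ℤ) * mseq p n ≤ ((p:ℤ)-4) * mseq p n :=
        mul_le_mul_of_nonneg_right hle (by linarith)
      nlinarith

lemma code_shift' (p : ℕ) (hp : 5 ≤ p) (k : ℕ) (μ : ℕ) (hμ : (μ : ℤ) = mseq p k)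
    (a : ℕ →₀ ℕ) (ha : IsCode p μ a) : shiftCode p a = mseq p (k + 1) := by
  obtain ⟨h1, h2, h3⟩ := ha
  set N := max (k+1) (a.support.sup id + 1) with hN
  have hsub : a.support ⊆ Finset.range N := by
    intro i hi
    have : i ≤ a.support.sup id := Finset.le_sup (f := id) hi
    exact Finset.mem_range.mpr (by omega)
  have hsum : (mseq p k) = ∑ i ∈ Finset.range N, (a i : ℤ) * mseq p i := by
    rw [← hμ, h2, Finsupp.sum_of_support_subset a hsub _ (by intros; simp)]
  have hnonneg : ∀ i ∈ Finset.range N, 0 ≤ (a i : ℤ) * mseq p i := fun i _ =>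
    mul_nonneg (by positivity) (by linarith [mseq_pos' p hp i])
  have hhigh : ∀ i, k < i → a i = 0 := by
    intro i hki
    by_contra hne
    have hiN : i ∈ Finset.range N := by
      by_contra hiN
      exact hne (Finsupp.notMem_support_iff.mp (fun hmem => hiN (hsub hmem)))
    have h1' : (1:ℤ) ≤ (a i : ℤ) := by omega
    have hmi : mseq p k < mseq p i := mseq_mono' p hp hki
    have : (a i : ℤ) * mseq p i ≤ ∑ j ∈ Finset.range N, (a j : ℤ) * mseq p j :=
      Finset.single_le_sum hnonneg hiN
    nlinarith [mseq_pos' p hp i]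
  have hsplit : mseq p k = (∑ i ∈ Finset.range k, (a i : ℤ) * mseq p i) + (a k : ℤ) * mseq p k := by
    have hkN : k + 1 ≤ N := le_max_left _ _
    have : ∑ i ∈ Finset.range N, (a i : ℤ) * mseq p i
        = ∑ i ∈ Finset.range (k+1), (a i : ℤ) * mseq p i := by
      rw [← Finset.sum_range_add_sum_Ico _ hkN]
      have : ∑ i ∈ Finset.Ico (k+1) N, (a i : ℤ) * mseq p i = 0 :=
        Finset.sum_eq_zero fun i hi => by
          rw [hhigh i (by exact (Finset.mem_Ico.mp hi).1)]; simp
      rw [this, add_zero]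
    rw [this, Finset.sum_range_succ] at hsum
    exact hsum
  have hbd := code_bound' p hp a h1 h3 k
  have hlow_nonneg : 0 ≤ ∑ i ∈ Finset.range k, (a i : ℤ) * mseq p i :=
    Finset.sum_nonneg fun i _ => mul_nonneg (by positivity) (by linarith [mseq_pos' p hp i])
  have hmk := mseq_pos' p hp k
  have hak : a k = 1 := by
    rcases Nat.lt_or_ge (a k) 1 with h | h
    · interval_cases h' : a k
      · simp [h'] at hsplit; omega
    · rcases Nat.lt_or_ge (a k) 2 with h' | h'
      · omega
      · exfalso
        have : (2:ℤ) ≤ (a k : ℤ) := by omega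
        nlinarith
  have hlow : ∀ i, i < k → a i = 0 := by
    have hz : ∑ i ∈ Finset.range k, (a i : ℤ) * mseq p i = 0 := by
      rw [hak] at hsplit; push_cast at hsplit; linarith
    intro i hik
    have := (Finset.sum_eq_zero_iff_of_nonneg (fun i _ =>
      mul_nonneg (by positivity : (0:ℤ) ≤ (a i:ℤ)) (by linarith [mseq_pos' p hp i]))).mp hz i
      (Finset.mem_range.mpr hik)
    have hmi := mseq_pos' p hp i
    rcases mul_eq_zero.mp (this) with h | h
    · exact_mod_cast h
    · omega
  have hne : ∀ i, i ≠ k → a i = 0 := by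
    intro i hik
    rcases Nat.lt_or_ge i k with h | h
    · exact hlow i h
    · exact hhigh i (by omega)
  rw [shiftCode, Finsupp.sum_of_support_subset a hsub _ (by intros; simp)]
  rw [Finset.sum_eq_single_of_mem k (Finset.mem_range.mpr (by omega))
    (fun i _ hik => by rw [hne i hik]; simp)]
  rw [hak]; simp

lemma subst_length' (p : ℕ) (hp : 5 ≤ p) (x : Letter) : (subst p x).length = arity p x := by
  cases x <;> simp [subst, arity] <;> omega

lemma arity_ge_two' (p : ℕ) (hp : 5 ≤ p) (x : Letter) : 2 ≤ arity p x := by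
  cases x <;> simp [arity] <;> omega

lemma subst_countB' (p : ℕ) (x : Letter) : (subst p x).count Letter.B = 1 := by
  cases x <;> simp [subst, List.count_cons, List.count_replicate]

lemma subst_concat' (p : ℕ) (hp : 5 ≤ p) (x : Letter) :
    ∃ q, subst p x = q ++ [Letter.W] := by
  cases x
  · refine ⟨Letter.B :: List.replicate (p - 5) Letter.W, ?_⟩
    show Letter.B :: List.replicate (p-4) Letter.W = _
    have : p - 4 = (p - 5) + 1 := by omega
    rw [this, List.replicate_succ']
    simp
  · refine ⟨Letter.B :: List.replicate (p - 4) Letter.W, ?_⟩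
    show Letter.B :: List.replicate (p-3) Letter.W = _
    have : p - 3 = (p - 4) + 1 := by omega
    rw [this, List.replicate_succ']
    simp

lemma flatMap_countB' (p : ℕ) (l : List Letter) :
    (l.flatMap (subst p)).count Letter.B = l.length := by
  induction l with
  | nil => simp
  | cons x xs ih => simp [List.flatMap_cons, List.count_append, ih, subst_countB']; omega

lemma flatMap_length' (p : ℕ) (l : List Letter) :
    (l.flatMap (subst p)).length = (l.map (fun x => (subst p x).length)).sum := by
  rw [List.length_flatMap]

lemma take_flatMap' (f : Letter → List Letter) :
    ∀ (l : List Letter) (t : ℕ),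
      (l.flatMap f).take (((l.take t).map (fun x => (f x).length)).sum) = (l.take t).flatMap f := by
  intro l
  induction l with
  | nil => intro t; simp
  | cons x xs ih =>
    intro t
    cases t with
    | zero => simp
    | succ t =>
      rw [List.take_succ_cons, List.map_cons, List.sum_cons, List.flatMap_cons,
        List.take_length_add_append, List.flatMap_cons, ih]

lemma aritysum_eq' (p : ℕ) (hp : 5 ≤ p) (l : List Letter) :
    ((l.map (arity p)).sum : ℤ) = ((p:ℤ) - 2) * l.length - l.count Letter.B := by
  induction l with
  | nil => simp
  | cons x xs ih =>
    rw [List.map_cons, List.sum_cons, Nat.cast_add, ih]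
    cases x
    · have : (arity p Letter.B : ℤ) = (p:ℤ) - 3 := by simp [arity]; omega
      rw [this]; simp [List.count_cons, List.length_cons]; push_cast; ring
    · have : (arity p Letter.W : ℤ) = (p:ℤ) - 2 := by simp [arity]; omega
      rw [this]; simp [List.count_cons, List.length_cons]; push_cast; ring

lemma whiteLevel_countB' (p : ℕ) (n : ℕ) :
    (whiteLevel p (n+1)).count Letter.B = (whiteLevel p n).length := by
  show ((whiteLevel p n).flatMap (subst p)).count Letter.B = _
  exact flatMap_countB' p _

lemma whiteLevel_length' (p : ℕ) (hp : 5 ≤ p) :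
    ∀ n, ((whiteLevel p n).length : ℤ) = mseq p n := by
  have hp' : (5:ℤ) ≤ (p:ℤ) := by exact_mod_cast hp
  have step : ∀ n, ((whiteLevel p (n+1)).length : ℤ)
      = ((p:ℤ) - 2) * (whiteLevel p n).length - (whiteLevel p n).count Letter.B := by
    intro n
    show (((whiteLevel p n).flatMap (subst p)).length : ℤ) = _
    rw [flatMap_length']
    have : (whiteLevel p n).map (fun x => (subst p x).length) = (whiteLevel p n).map (arity p) := by
      exact List.map_congr_left fun x _ => subst_length' p hp x
    rw [this]
    have := aritysum_eq' p hp (whiteLevel p n)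
    push_cast at this ⊢
    linarith
  intro n
  induction n using Nat.strong_induction_on with
  | _ n ih =>
  match n with
  | 0 => simp [whiteLevel, mseq]
  | 1 =>
    rw [step 0]
    show _ = (p:ℤ) - 2
    simp [whiteLevel]
  | n+2 =>
    rw [step (n+1), mseq_two', ih (n+1) (by omega), whiteLevel_countB', ih n (by omega)]

lemma csum_prefix' (p : ℕ) (hp : 5 ≤ p) (n j : ℕ) :
    (whiteLevel p (n+1)).take (csum p n j) = ((whiteLevel p n).take j).flatMap (subst p) := by
  show ((whiteLevel p n).flatMap (subst p)).take _ = _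
  have : csum p n j = (((whiteLevel p n).take j).map (fun x => (subst p x).length)).sum := by
    unfold csum
    congr 1
    exact (List.map_congr_left fun x _ => (subst_length' p hp x)).symm
  rw [this, take_flatMap']

lemma csum_cast' (p : ℕ) (hp : 5 ≤ p) (n j : ℕ) (hj : j ≤ (whiteLevel p n).length) :
    (csum p n j : ℤ) = ((p:ℤ) - 2) * j - ((whiteLevel p n).take j).count Letter.B := by
  unfold csum
  rw [aritysum_eq' p hp, List.length_take]
  congr 2
  omega

lemma csum_succ' (p : ℕ) (n t : ℕ) (ht : t < (whiteLevel p n).length) :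
    csum p n (t+1) = csum p n t + arity p ((whiteLevel p n)[t]) := by
  unfold csum
  rw [List.take_succ, List.getElem?_eq_getElem ht, List.map_append, List.sum_append]
  simp

lemma key' (p : ℕ) (hp : 5 ≤ p) : ∀ k, ∃ j : ℕ, 1 ≤ j ∧
    (j:ℤ) = mseq p k - (∑ i ∈ Finset.range k, mseq p i) ∧
    (((whiteLevel p k).take j).count Letter.B : ℤ)
      = ((p:ℤ)-2)*(j:ℤ) - (mseq p (k+1) - ∑ i ∈ Finset.range (k+1), mseq p i) - 1 := by
  have hp' : (5:ℤ) ≤ (p:ℤ) := by exact_mod_cast hp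
  intro k
  induction k with
  | zero =>
    refine ⟨1, le_refl 1, by simp [mseq], ?_⟩
    have : whiteLevel p 0 = [Letter.W] := rfl
    rw [this]
    have h1 : mseq p 1 = (p:ℤ) - 2 := rfl
    have h0 : mseq p 0 = 1 := rfl
    simp [Finset.sum_range_succ, h1, h0, List.count_cons]
  | succ k ih =>
    obtain ⟨j, hj1, hjv, hcnt⟩ := ih
    have hlen := whiteLevel_length' p hp k
    have hlen1 := whiteLevel_length' p hp (k+1)
    have hSk := msum_nonneg' p hp k
    have hSk1 := msum_nonneg' p hp (k+1)
    have hmk := mseq_pos' p hp k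
    have hmk1 := mseq_pos' p hp (k+1)
    have hlt1 := msum_lt_mseq' p hp (k+1)
    have hjle : j ≤ (whiteLevel p k).length := by
      have : (j:ℤ) ≤ ((whiteLevel p k).length : ℤ) := by rw [hlen]; linarith
      exact_mod_cast this
    have htl : ((whiteLevel p k).take j).length = j := by
      rw [List.length_take]; omega
    have hcsum : (csum p k j : ℤ) = (mseq p (k+1) - ∑ i ∈ Finset.range (k+1), mseq p i) + 1 := by
      rw [csum_cast' p hp k j hjle, hcnt]; ring
    have hcsum_ge : 2 ≤ csum p k j := by
      have : (2:ℤ) ≤ (csum p k j : ℤ) := by rw [hcsum]; linarith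
      exact_mod_cast this
    refine ⟨csum p k j - 1, by omega, ?_, ?_⟩
    · have : ((csum p k j - 1 : ℕ) : ℤ) = (csum p k j : ℤ) - 1 := by omega
      rw [this, hcsum]; ring
    · have hPne : (whiteLevel p k).take j ≠ [] := by
        intro h
        rw [h] at htl
        simp at htl
        omega
      obtain hnil | ⟨P', x, hP⟩ := ((whiteLevel p k).take j).eq_nil_or_concat
      · exact absurd hnil hPne
      rw [List.concat_eq_append] at hP
      obtain ⟨q, hq⟩ := subst_concat' p hp x
      have hflat : ((whiteLevel p k).take j).flatMap (subst p)
          = (P'.flatMap (subst p) ++ q) ++ [Letter.W] := by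
        rw [hP, List.flatMap_append]
        simp [hq]
      have hcle : csum p k j ≤ (whiteLevel p (k+1)).length := by
        have hSrec : (∑ i ∈ Finset.range (k+1), mseq p i)
            = (∑ i ∈ Finset.range k, mseq p i) + mseq p k := Finset.sum_range_succ _ _
        have : (csum p k j : ℤ) ≤ ((whiteLevel p (k+1)).length : ℤ) := by
          rw [hcsum, hlen1]; linarith
        exact_mod_cast this
      have hpre := csum_prefix' p hp k j
      have hQlen : (P'.flatMap (subst p) ++ q).length = csum p k j - 1 := by
        have h1 : ((whiteLevel p (k+1)).take (csum p k j)).length = csum p k j := by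
          rw [List.length_take]; omega
        rw [hpre, hflat] at h1
        simp only [List.length_append, List.length_cons, List.length_nil] at h1 ⊢
        omega
      have htakej' : (whiteLevel p (k+1)).take (csum p k j - 1)
          = P'.flatMap (subst p) ++ q := by
        have h2 : (whiteLevel p (k+1)).take (csum p k j - 1)
            = ((whiteLevel p (k+1)).take (csum p k j)).take (csum p k j - 1) := by
          rw [List.take_take]
          congr 1
          omega
        rw [h2, hpre, hflat, List.take_left' hQlen]
      have hcnt' : ((whiteLevel p (k+1)).take (csum p k j - 1)).count Letter.B = j := by
        rw [htakej']
        have : (P'.flatMap (subst p) ++ q).count Letter.B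
            = ((P'.flatMap (subst p) ++ q) ++ [Letter.W]).count Letter.B := by
          rw [List.count_append (l₂ := [Letter.W])]
          simp
        rw [this, ← hflat, flatMap_countB', htl]
      rw [hcnt']
      have hj'c : ((csum p k j - 1 : ℕ) : ℤ) = (csum p k j : ℤ) - 1 := by omega
      rw [hj'c, hcsum]
      have hI := mseq_identity' p hp k
      have e1 : (∑ i ∈ Finset.range (k+1), mseq p i)
          = (∑ i ∈ Finset.range k, mseq p i) + mseq p k := Finset.sum_range_succ _ _
      have e2 : (∑ i ∈ Finset.range (k+2), mseq p i)
          = (∑ i ∈ Finset.range (k+1), mseq p i) + mseq p (k+1) := Finset.sum_range_succ _ _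
      rw [hjv, mseq_two', e2, e1]
      linear_combination -hI

end AuxMetallic

/-- in the white metallic tree, for every `k` the node `m (k+1)`
is the preferred son of the node `m k`: the shift of the metallic code of
`m k` equals `m (k+1)` (so the code of `m (k+1)` is that of `m k` followed by
a `0`), `m (k+1)` is a son of `m k`, and indeed its penultimate son. -/
theorem mseq_succ_preferred_son (p : ℕ) (hp : 5 ≤ p) (k : ℕ) (μ σ : ℕ)
    (hμ : (μ : ℤ) = mseq p k) (hσ : (σ : ℤ) = mseq p (k + 1)) :
    (∀ a : ℕ →₀ ℕ, IsCode p μ a → shiftCode p a = mseq p (k + 1)) ∧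
    IsSon p μ σ ∧ IsPenultimateSon p μ σ := by
  have hp' : (5:ℤ) ≤ (p:ℤ) := by exact_mod_cast hp
  refine ⟨fun a ha => code_shift' p hp k μ hμ a ha, ?_⟩
  obtain ⟨j, hj1, hjv, hcnt⟩ := key' p hp k
  obtain ⟨j', hj'1, hj'v, _⟩ := key' p hp (k+1)
  have hlen := whiteLevel_length' p hp k
  have hlen1 := whiteLevel_length' p hp (k+1)
  have hSk := msum_nonneg' p hp k
  have hSk1 := msum_nonneg' p hp (k+1)
  have hmk := mseq_pos' p hp k
  have hmk1 := mseq_pos' p hp (k+1)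
  have hjle : j ≤ (whiteLevel p k).length := by
    have : (j:ℤ) ≤ ((whiteLevel p k).length : ℤ) := by rw [hlen]; linarith
    exact_mod_cast this
  have hj'le : j' ≤ (whiteLevel p (k+1)).length := by
    have : (j':ℤ) ≤ ((whiteLevel p (k+1)).length : ℤ) := by rw [hlen1]; linarith
    exact_mod_cast this
  have htl : ((whiteLevel p k).take j).length = j := by
    rw [List.length_take]; omega
  have hcsum : (csum p k j : ℤ) = (mseq p (k+1) - ∑ i ∈ Finset.range (k+1), mseq p i) + 1 := by
    rw [csum_cast' p hp k j hjle, hcnt]; ring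
  have hcj : csum p k j = j' + 1 := by
    have : (csum p k j : ℤ) = (j' : ℤ) + 1 := by rw [hcsum, hj'v]
    exact_mod_cast this
  have pos1 : NodePos p μ k j := ⟨by rw [hμ, hjv]; ring, hj1, hjle⟩
  have pos2 : NodePos p σ (k+1) j' := ⟨by rw [hσ, hj'v]; ring, hj'1, hj'le⟩
  have hstep : csum p k j = csum p k (j-1) + arity p ((whiteLevel p k)[j-1]'(by omega)) := by
    have h := csum_succ' p k (j-1) (by omega)
    have : j - 1 + 1 = j := by omega
    rw [this] at h
    exact h
  have har := arity_ge_two' p hp ((whiteLevel p k)[j-1]'(by omega))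
  have hlt : csum p k (j-1) < j' := by omega
  exact ⟨⟨k, j, j', pos1, pos2, hlt, by omega⟩, ⟨k, j, j', pos1, pos2, hlt, by omega⟩⟩
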